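/- arXiv:1709.06878 — 2 statements merged into one kernel-verified Lean document; each statement's English description precedes it below -/
import Mathlib

section
/- Let η_l < η_r and let η : ℝ → ℝ be of class C² with η'' bounded on ℝ, lim_{x→−∞} η(x) = η_l, lim_{x→+∞} η(x) = η_r, and such that there exist constants B > A > 0 with A|x|^{−2} ≤ η'(x) ≤ B|x|^{−2} for all |x| ≥ 1. Then lim_{x→+∞} x·|∂x|η(x) = (η_r − η_l)/π. -/
open MeasureTheory Filter Set Topology

/-!
Substituting `y = x s` turns `x · ∫₀^∞ (η(x+y) - 2η(x) + η(x-y)) / y² dy` into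
`∫₀^∞ (η(x+xs) - 2η(x) + η(x-xs)) / s² ds`. As `x → ∞` this integrand tends to `0` for `s < 1`
and to `(ηl - ηr) / s²` for `s > 1`, whose integral is `ηl - ηr`. Dominated convergence applies
with a majorant `K s^(-2/3)` near `0` and `K s^(-2)` away from `0`: for small `s` the rescaled
integrand is bounded both by `2M x²` (Taylor, `|η''| ≤ M`) and by `2B / (x s)` (from
`0 ≤ η' ≤ B / t²`), and `min (x², 1 / (x s)) ≤ s^(-2/3)` uniformly in `x`.
-/

/-- The half-Laplacian `|∂x|` acting on a bounded C² function. -/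
noncomputable def halfLap (u : ℝ → ℝ) (x : ℝ) : ℝ :=
  -(1 / Real.pi) * ∫ y in Set.Ioi (0 : ℝ), (u (x + y) - 2 * u x + u (x - y)) / y ^ 2

def secondDiff (u : ℝ → ℝ) (x y : ℝ) : ℝ := u (x + y) - 2 * u x + u (x - y)

lemma abs_secondDiff_le_of_abs_deriv_deriv_le {u : ℝ → ℝ} {M : ℝ} (hu : Differentiable ℝ u)
    (hu' : Differentiable ℝ (deriv u)) (hM : ∀ t, |deriv (deriv u) t| ≤ M) (x : ℝ) {y : ℝ}
    (hy : 0 ≤ y) : |secondDiff u x y| ≤ 2 * M * y ^ 2 := by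
  have hlip : ∀ a b, |deriv u b - deriv u a| ≤ M * |b - a| := fun a b => by
    simpa only [Real.norm_eq_abs] using Convex.norm_image_sub_le_of_norm_deriv_le
      (fun t _ => hu' t) (fun t _ => (Real.norm_eq_abs _).trans_le (hM t)) convex_univ
      (mem_univ a) (mem_univ b)
  set φ : ℝ → ℝ := fun t => u (x + t) + u (x - t)
  have hφ : ∀ t, HasDerivAt φ (deriv u (x + t) - deriv u (x - t)) t := fun t => by
    have h1 := (hu (x + t)).hasDerivAt.comp t ((hasDerivAt_id t).const_add x)
    have h2 := (hu (x - t)).hasDerivAt.comp t ((hasDerivAt_id t).const_sub x)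
    exact (h1.add h2).congr_deriv (by ring)
  have hφ' : ∀ t ∈ Icc 0 y, ‖deriv φ t‖ ≤ 2 * M * y := fun t ht => by
    rw [(hφ t).deriv, Real.norm_eq_abs]
    calc _ ≤ M * |x + t - (x - t)| := hlip _ _
      _ = M * (2 * t) := by rw [abs_of_nonneg (by linarith [ht.1])]; ring
      _ ≤ 2 * M * y := by nlinarith [ht.1, ht.2, (abs_nonneg _).trans (hM 0)]
  have key := Convex.norm_image_sub_le_of_norm_deriv_le (fun t _ => (hφ t).differentiableAt) hφ'
    (convex_Icc 0 y) (left_mem_Icc.2 hy) (right_mem_Icc.2 hy)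
  calc |secondDiff u x y| = |φ y - φ 0| := by
        simp only [secondDiff, φ, add_zero, sub_zero]; ring_nf
    _ ≤ 2 * M * y * |y - 0| := by simpa only [Real.norm_eq_abs] using key
    _ = 2 * M * y ^ 2 := by rw [sub_zero, abs_of_nonneg hy]; ring

lemma sub_le_mul_inv_sub_inv_of_deriv_le {u : ℝ → ℝ} {B a b : ℝ} (hu : Differentiable ℝ u)
    (ha : 0 < a) (hab : a ≤ b) (hB : ∀ t ∈ Icc a b, deriv u t ≤ B / t ^ 2) :
    u b - u a ≤ B * (a⁻¹ - b⁻¹) := by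
  have hd : ∀ t ∈ Icc a b, HasDerivAt (fun t => u t + B * t⁻¹) (deriv u t - B / t ^ 2) t :=
    fun t ht => ((hu t).hasDerivAt.add
      ((hasDerivAt_inv (ha.trans_le ht.1).ne').const_mul B)).congr_deriv (by ring)
  have hanti : AntitoneOn (fun t => u t + B * t⁻¹) (Icc a b) := by
    apply antitoneOn_of_deriv_nonpos (convex_Icc a b)
    · exact fun t ht => (hd t ht).continuousAt.continuousWithinAt
    · rw [interior_Icc]
      exact fun t ht => (hd t (Ioo_subset_Icc_self ht)).differentiableAt.differentiableWithinAt
    · rw [interior_Icc]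
      intro t ht
      rw [(hd t (Ioo_subset_Icc_self ht)).deriv]
      linarith [hB t (Ioo_subset_Icc_self ht)]
  have := hanti (left_mem_Icc.2 hab) (right_mem_Icc.2 hab) hab
  simp only at this
  linarith

lemma abs_secondDiff_le_of_deriv_le_div_sq {u : ℝ → ℝ} {B x y : ℝ} (hu : Differentiable ℝ u)
    (h0 : ∀ t, 1 ≤ t → 0 ≤ deriv u t) (hB : ∀ t, 1 ≤ t → deriv u t ≤ B / t ^ 2)
    (hx : 2 ≤ x) (hy : 0 ≤ y) (hyx : y ≤ x / 2) :
    |secondDiff u x y| ≤ 2 * B * y / x ^ 2 := by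
  have hB0 : 0 ≤ B := by simpa using (h0 1 le_rfl).trans (hB 1 le_rfl)
  have hmono : MonotoneOn u (Ici 1) :=
    monotoneOn_of_deriv_nonneg (convex_Ici 1) hu.continuous.continuousOn hu.differentiableOn
      (by simpa using fun t ht => h0 t ht.le)
  have hB' : ∀ a b, 1 ≤ a → a ≤ b → u b - u a ≤ B * (a⁻¹ - b⁻¹) := fun a b ha hab =>
    sub_le_mul_inv_sub_inv_of_deriv_le hu (by linarith) hab fun t ht => hB t (ha.trans ht.1)
  have h1 : (1 : ℝ) ≤ x - y := by linarith
  have hr : u (x + y) - u x ≤ B * y / x ^ 2 := by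
    refine (hB' x (x + y) (by linarith) (by linarith)).trans ?_
    rw [inv_sub_inv (by positivity) (by positivity), mul_div_assoc]
    refine mul_le_mul_of_nonneg_left ?_ hB0
    rw [div_le_div_iff₀ (by positivity) (by positivity)]
    nlinarith [mul_nonneg (mul_nonneg hy hy) (by linarith : (0 : ℝ) ≤ x)]
  have hl : u x - u (x - y) ≤ 2 * B * y / x ^ 2 := by
    refine (hB' (x - y) x h1 (by linarith)).trans ?_
    rw [inv_sub_inv (by positivity) (by positivity), mul_comm 2 B, mul_assoc, mul_div_assoc]
    refine mul_le_mul_of_nonneg_left ?_ hB0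
    rw [div_le_div_iff₀ (by positivity) (by positivity)]
    nlinarith [mul_nonneg (mul_nonneg hy (by linarith : (0 : ℝ) ≤ x)) (by linarith : 0 ≤ x - 2 * y)]
  have hr0 : u x ≤ u (x + y) :=
    hmono (mem_Ici.2 (by linarith)) (mem_Ici.2 (by linarith)) (by linarith)
  have hl0 : u (x - y) ≤ u x := hmono (mem_Ici.2 h1) (mem_Ici.2 (by linarith)) (by linarith)
  have hpos : 0 ≤ B * y / x ^ 2 := by positivity
  have htwo : 2 * B * y / x ^ 2 = 2 * (B * y / x ^ 2) := by ring
  rw [secondDiff, abs_le]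
  constructor <;> linarith

lemma min_sq_inv_mul_le_rpow {x s : ℝ} (hx : 0 < x) (hs : 0 < s) :
    min (x ^ 2) (x * s)⁻¹ ≤ s ^ (-(2 / 3 : ℝ)) := by
  have hm : 0 ≤ min (x ^ 2) (x * s)⁻¹ := le_min (by positivity) (by positivity)
  have hcube : (s ^ (-(2 / 3 : ℝ))) ^ 3 = x ^ 2 * (x * s)⁻¹ * (x * s)⁻¹ := by
    rw [← Real.rpow_natCast, ← Real.rpow_mul hs.le]
    field_simp
    norm_num [Real.rpow_neg hs.le]
    field_simp
  rw [← pow_le_pow_iff_left₀ hm (by positivity) three_ne_zero, hcube, pow_succ, sq]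
  gcongr
  all_goals first | exact min_le_left _ _ | exact min_le_right _ _

noncomputable def secondDiffMajorant (K s : ℝ) : ℝ :=
  if s ≤ 1 / 2 then K * s ^ (-(2 / 3 : ℝ)) else K * s ^ (-2 : ℝ)

lemma integrableOn_secondDiffMajorant (K : ℝ) : IntegrableOn (secondDiffMajorant K) (Ioi 0) := by
  rw [← Ioc_union_Ioi_eq_Ioi (by norm_num : (0 : ℝ) ≤ 1 / 2)]
  refine IntegrableOn.union ?_ ?_
  · refine IntegrableOn.congr_fun ?_ (fun s hs => (if_pos hs.2).symm) measurableSet_Ioc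
    exact ((intervalIntegral.intervalIntegrable_rpow' (by norm_num)).const_mul K).1
  · refine IntegrableOn.congr_fun ?_ (fun s hs => (if_neg (not_le.2 hs)).symm) measurableSet_Ioi
    exact (integrableOn_Ioi_rpow_of_lt (by norm_num) (by norm_num)).const_mul K

lemma abs_secondDiff_mul_div_sq_le {u : ℝ → ℝ} {M B C x s : ℝ} (hu : Differentiable ℝ u)
    (hu' : Differentiable ℝ (deriv u)) (hM : ∀ t, |deriv (deriv u) t| ≤ M)
    (h0 : ∀ t, 1 ≤ t → 0 ≤ deriv u t) (hB : ∀ t, 1 ≤ t → deriv u t ≤ B / t ^ 2)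
    (hC : ∀ t, |u t| ≤ C) (hx : 2 ≤ x) (hs : 0 < s) :
    |secondDiff u x (x * s) / s ^ 2| ≤ secondDiffMajorant (2 * M + 2 * B + 4 * C) s := by
  have hM0 : 0 ≤ M := (abs_nonneg _).trans (hM 0)
  have hB0 : 0 ≤ B := by simpa using (h0 1 le_rfl).trans (hB 1 le_rfl)
  have hC0 : 0 ≤ C := (abs_nonneg _).trans (hC 0)
  set K := 2 * M + 2 * B + 4 * C
  have hx0 : 0 < x := by linarith
  rw [abs_div, abs_of_pos (by positivity : (0 : ℝ) < s ^ 2), secondDiffMajorant]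
  split_ifs with hs2
  · have hTaylor : |secondDiff u x (x * s)| / s ^ 2 ≤ K * x ^ 2 := by
      rw [div_le_iff₀ (by positivity)]
      calc _ ≤ 2 * M * (x * s) ^ 2 :=
            abs_secondDiff_le_of_abs_deriv_deriv_le hu hu' hM x (by positivity)
        _ ≤ K * x ^ 2 * s ^ 2 := by
            rw [mul_pow, ← mul_assoc]; gcongr; linarith
    have hDecay : |secondDiff u x (x * s)| / s ^ 2 ≤ K * (x * s)⁻¹ := by
      rw [div_le_iff₀ (by positivity)]
      calc _ ≤ 2 * B * (x * s) / x ^ 2 :=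
            abs_secondDiff_le_of_deriv_le_div_sq hu h0 hB hx (by positivity) (by nlinarith)
        _ ≤ K * (x * s)⁻¹ * s ^ 2 := by
            rw [show 2 * B * (x * s) / x ^ 2 = 2 * B * (x * s)⁻¹ * s ^ 2 by field_simp]
            gcongr; linarith
    calc _ ≤ min (K * x ^ 2) (K * (x * s)⁻¹) := le_min hTaylor hDecay
      _ = K * min (x ^ 2) (x * s)⁻¹ := (mul_min_of_nonneg _ _ (by positivity)).symm
      _ ≤ K * s ^ (-(2 / 3 : ℝ)) := by gcongr; exact min_sq_inv_mul_le_rpow hx0 hs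
  · have hbdd : |secondDiff u x (x * s)| ≤ K := by
      rw [secondDiff]
      calc _ ≤ |u (x + x * s)| + 2 * |u x| + |u (x - x * s)| := by
            have := abs_add_three (u (x + x * s)) (-(2 * u x)) (u (x - x * s))
            simp only [abs_neg, abs_mul, abs_two] at this
            simpa [sub_eq_add_neg] using this
        _ ≤ K := by linarith [hC (x + x * s), hC x, hC (x - x * s)]
    rw [Real.rpow_neg hs.le, Real.rpow_two, ← div_eq_mul_inv]
    gcongr

lemma tendsto_secondDiff_mul_div_sq {u : ℝ → ℝ} {l r s : ℝ} (hbot : Tendsto u atBot (𝓝 l))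
    (htop : Tendsto u atTop (𝓝 r)) (hs : 0 < s) (hs1 : s ≠ 1) :
    Tendsto (fun x => secondDiff u x (x * s) / s ^ 2) atTop
      (𝓝 ((Ioi 1).indicator (fun s => (l - r) / s ^ 2) s)) := by
  simp only [secondDiff]
  have hplus : Tendsto (fun x => u (x + x * s)) atTop (𝓝 r) :=
    htop.comp ((tendsto_id.atTop_mul_const (by linarith : (0 : ℝ) < 1 + s)).congr
      fun x => by simp only [id]; ring)
  rcases lt_or_gt_of_ne hs1 with hlt | hgt
  · have hminus : Tendsto (fun x => u (x - x * s)) atTop (𝓝 r) :=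
      htop.comp ((tendsto_id.atTop_mul_const (by linarith : (0 : ℝ) < 1 - s)).congr
        fun x => by simp only [id]; ring)
    rw [indicator_of_notMem (show s ∉ Ioi 1 from not_lt.2 hlt.le)]
    convert ((hplus.sub (htop.const_mul 2)).add hminus).div_const (s ^ 2) using 2
    ring
  · have hminus : Tendsto (fun x => u (x - x * s)) atTop (𝓝 l) :=
      hbot.comp ((tendsto_id.atTop_mul_const_of_neg (by linarith : 1 - s < 0)).congr
        fun x => by simp only [id]; ring)
    rw [indicator_of_mem (mem_Ioi.2 hgt)]
    convert ((hplus.sub (htop.const_mul 2)).add hminus).div_const (s ^ 2) using 2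
    ring

lemma integral_indicator_Ioi_one_div_sq (c : ℝ) :
    ∫ s in Ioi 0, (Ioi 1).indicator (fun s => c / s ^ 2) s = c := by
  rw [setIntegral_indicator measurableSet_Ioi, inter_eq_right.2 (Ioi_subset_Ioi zero_le_one)]
  have hpow : EqOn (fun s : ℝ => c / s ^ 2) (fun s => c * s ^ (-2 : ℝ)) (Ioi 1) := fun s hs => by
    simp only [Real.rpow_neg (zero_le_one.trans (le_of_lt hs)), Real.rpow_two, div_eq_mul_inv]
  rw [setIntegral_congr_fun measurableSet_Ioi hpow, integral_const_mul,
    integral_Ioi_rpow_of_lt (by norm_num) one_pos]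
  norm_num

lemma mul_integral_Ioi_div_sq {g : ℝ → ℝ} {x : ℝ} (hx : 0 < x) :
    x * ∫ y in Ioi 0, g y / y ^ 2 = ∫ s in Ioi 0, g (x * s) / s ^ 2 := by
  have h := integral_comp_mul_left_Ioi (fun y => g y / y ^ 2) 0 hx
  rw [mul_zero, smul_eq_mul] at h
  calc x * ∫ y in Ioi 0, g y / y ^ 2 = x ^ 2 * ∫ s in Ioi 0, g (x * s) / (x * s) ^ 2 := by
        rw [h]; field_simp
    _ = ∫ s in Ioi 0, g (x * s) / s ^ 2 := by
        rw [← integral_const_mul]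
        refine setIntegral_congr_fun measurableSet_Ioi fun s hs => ?_
        field_simp [(mem_Ioi.1 hs).ne']

lemma exists_forall_abs_le_of_tendsto_atBot_atTop {u : ℝ → ℝ} {l r : ℝ} (hu : Continuous u)
    (hbot : Tendsto u atBot (𝓝 l)) (htop : Tendsto u atTop (𝓝 r)) : ∃ C, ∀ t, |u t| ≤ C := by
  obtain ⟨C, hC⟩ := isBounded_iff_forall_norm_le.1
    (hu.isBounded_range_iff_isBigO_atTop_atBot.2 ⟨htop.isBigO_one ℝ, hbot.isBigO_one ℝ⟩)
  exact ⟨C, fun t => hC _ (mem_range_self t)⟩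

lemma tendsto_integral_secondDiff_mul_div_sq {u : ℝ → ℝ} {l r K : ℝ} (hu : Continuous u)
    (hbot : Tendsto u atBot (𝓝 l)) (htop : Tendsto u atTop (𝓝 r))
    (hbound : ∀ x s, 2 ≤ x → 0 < s → |secondDiff u x (x * s) / s ^ 2| ≤ secondDiffMajorant K s) :
    Tendsto (fun x => ∫ s in Ioi 0, secondDiff u x (x * s) / s ^ 2) atTop (𝓝 (l - r)) := by
  rw [← integral_indicator_Ioi_one_div_sq (l - r)]
  refine tendsto_integral_filter_of_dominated_convergence _ ?_ ?_
    (integrableOn_secondDiffMajorant K) ?_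
  · refine Eventually.of_forall fun x =>
      (ContinuousOn.div ?_ ?_ ?_).aestronglyMeasurable measurableSet_Ioi
    · exact (by unfold secondDiff; fun_prop : Continuous fun s => secondDiff u x (x * s)).continuousOn
    · exact (continuous_pow 2).continuousOn
    · exact fun s hs => pow_ne_zero 2 (mem_Ioi.1 hs).ne'
  · filter_upwards [eventually_ge_atTop 2] with x hx
    filter_upwards [ae_restrict_mem measurableSet_Ioi] with s hs
    exact hbound x s hx hs
  · filter_upwards [Measure.ae_ne _ 1, ae_restrict_mem measurableSet_Ioi] with s hs1 hs0
    exact tendsto_secondDiff_mul_div_sq hbot htop hs0 hs1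

theorem halfLap_asymptote_general
    (ηl ηr : ℝ)
    (η : ℝ → ℝ) (hη : ContDiff ℝ 2 η)
    (hη'' : ∃ M : ℝ, ∀ x, |deriv (deriv η) x| ≤ M)
    (hbot : Tendsto η atBot (nhds ηl)) (htop : Tendsto η atTop (nhds ηr))
    (hdecay : ∃ A B : ℝ, 0 < A ∧ A < B ∧ ∀ x : ℝ, 1 ≤ |x| →
      A / |x| ^ 2 ≤ deriv η x ∧ deriv η x ≤ B / |x| ^ 2) :
    Tendsto (fun x => x * halfLap η x) atTop (nhds ((ηr - ηl) / Real.pi)) := by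
  obtain ⟨M, hM⟩ := hη''
  obtain ⟨A, B, hA, -, hdecay⟩ := hdecay
  obtain ⟨C, hC⟩ := exists_forall_abs_le_of_tendsto_atBot_atTop hη.continuous hbot htop
  have hdecay' : ∀ t, 1 ≤ t → A / t ^ 2 ≤ deriv η t ∧ deriv η t ≤ B / t ^ 2 := fun t ht => by
    simpa only [abs_of_pos (zero_lt_one.trans_le ht)] using hdecay t (ht.trans (le_abs_self t))
  have hlim := tendsto_integral_secondDiff_mul_div_sq hη.continuous hbot htop
    fun x s hx hs => abs_secondDiff_mul_div_sq_le (hη.differentiable (by norm_num))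
      hη.differentiable_deriv_two hM
      (fun t ht => (by positivity : 0 ≤ A / t ^ 2).trans (hdecay' t ht).1)
      (fun t ht => (hdecay' t ht).2) hC hx hs
  have hscale : ∀ᶠ x in atTop,
      -(1 / Real.pi) * ∫ s in Ioi 0, secondDiff η x (x * s) / s ^ 2 = x * halfLap η x := by
    filter_upwards [eventually_gt_atTop 0] with x hx
    rw [← mul_integral_Ioi_div_sq hx, halfLap, mul_left_comm]
    rfl
  convert (hlim.const_mul (-(1 / Real.pi))).congr' hscale using 2
  ring

/-- `x · |∂x|η(x) → (η_r − η_l)/π` as `x → +∞`. -/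
theorem halfLap_asymptote
    (ηl ηr : ℝ) (hlr : ηl < ηr)
    (η : ℝ → ℝ) (hη : ContDiff ℝ 2 η)
    (hη'' : ∃ M : ℝ, ∀ x, |deriv (deriv η) x| ≤ M)
    (hbot : Tendsto η atBot (nhds ηl)) (htop : Tendsto η atTop (nhds ηr))
    (hdecay : ∃ A B : ℝ, 0 < A ∧ A < B ∧ ∀ x : ℝ, 1 ≤ |x| →
      A / |x| ^ 2 ≤ deriv η x ∧ deriv η x ≤ B / |x| ^ 2) :
    Tendsto (fun x => x * halfLap η x) atTop (nhds ((ηr - ηl) / Real.pi)) :=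
  halfLap_asymptote_general ηl ηr η hη hη'' hbot htop hdecay
end

section
/- Let η_l < η_r and let η : ℝ → ℝ be of class C² with η'' bounded on ℝ, lim_{x→−∞} η(x) = η_l, lim_{x→+∞} η(x) = η_r, and such that there exist constants B > A > 0 with A|x|^{−2} ≤ η'(x) ≤ B|x|^{−2} for all |x| ≥ 1. Then lim_{R→+∞} ∫_{−R}^{R} |∂x|η(x) dx = 0. -/
/-!
Integrating the second difference of `η` over `[-R, R]` in `x` first (Fubini is legitimate since
the integrand is `O(min(1, y⁻²))`) telescopes to the boundary terms
`∫_R^{R+y} f - ∫_{R-y}^R f` of the even function `f t = η t + η (-t) - (ηl + ηr)`, which is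
`O(1/t)` with derivative `O(t⁻²)`. For `y ≤ R/2` the mean value theorem bounds the boundary term
by `O(y²/R²)`; for larger `y` it is `O(√y)` because `|f t| ≲ t^{-1/2}`. Dominated convergence in `y`
then gives the limit `0`.
-/

open MeasureTheory Filter Set

theorem abs_second_diff_le {g : ℝ → ℝ} {M : ℝ} (hg : Differentiable ℝ g)
    (hg' : Differentiable ℝ (deriv g)) (hM : ∀ x, |deriv (deriv g) x| ≤ M) (x y : ℝ) :
    |g (x + y) - 2 * g x + g (x - y)| ≤ 2 * M * y ^ 2 := by
  have hlip : ∀ a b, |deriv g b - deriv g a| ≤ M * |b - a| := fun a b => by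
    simpa only [Real.norm_eq_abs] using
      convex_univ.norm_image_sub_le_of_norm_hasDerivWithin_le
        (fun t _ => (hg' t).hasDerivAt.hasDerivWithinAt) (fun t _ => hM t) (mem_univ a)
        (mem_univ b)
  have hφ : ∀ t, HasDerivAt (fun t => g (x + t) + g (x - t))
      (deriv g (x + t) - deriv g (x - t)) t := fun t => by
    simpa [← sub_eq_add_neg] using
      ((hg _).hasDerivAt.comp_const_add x t).fun_add ((hg _).hasDerivAt.comp_const_sub x t)
  have hbound : ∀ t ∈ uIcc 0 y, ‖deriv g (x + t) - deriv g (x - t)‖ ≤ 2 * M * |y| := by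
    intro t ht
    have hM0 : 0 ≤ M := (abs_nonneg _).trans (hM 0)
    have ht' : |t| ≤ |y| := by
      rcases le_total 0 y with h | h
      · rw [uIcc_of_le h] at ht; rw [abs_of_nonneg ht.1, abs_of_nonneg h]; exact ht.2
      · rw [uIcc_of_ge h] at ht; rw [abs_of_nonpos ht.2, abs_of_nonpos h]; linarith [ht.1]
    calc ‖deriv g (x + t) - deriv g (x - t)‖ ≤ M * |(x + t) - (x - t)| := hlip _ _
      _ = 2 * M * |t| := by rw [show (x + t) - (x - t) = 2 * t by ring, abs_mul]; norm_num; ring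
      _ ≤ 2 * M * |y| := by gcongr
  have := (convex_uIcc (0 : ℝ) y).norm_image_sub_le_of_norm_hasDerivWithin_le
    (fun t _ => (hφ t).hasDerivWithinAt) hbound left_mem_uIcc right_mem_uIcc
  simp only [add_zero, sub_zero, Real.norm_eq_abs] at this
  calc |g (x + y) - 2 * g x + g (x - y)| = |g (x + y) + g (x - y) - (g x + g x)| := by ring_nf
    _ ≤ 2 * M * |y| * |y| := this
    _ = 2 * M * y ^ 2 := by rw [mul_assoc, ← sq, sq_abs]

theorem abs_sub_le_of_abs_deriv_le_div_sq {g g' : ℝ → ℝ} {B a b : ℝ} (ha : 0 < a)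
    (hab : a ≤ b) (hg : ∀ t, a ≤ t → HasDerivAt g (g' t) t) (hB : ∀ t, a ≤ t → |g' t| ≤ B / t ^ 2) :
    |g b - g a| ≤ B / a - B / b := by
  have hpos : ∀ t ∈ Icc a b, t ≠ 0 := fun t ht => (ha.trans_le ht.1).ne'
  have hfence := image_norm_le_of_norm_deriv_right_le_deriv_boundary'
    (f := fun t => g t - g a) (B := fun t => B / a - B / t) (B' := fun t => B / t ^ 2)
    (fun t ht => ((hg t ht.1).continuousAt.sub continuousAt_const).continuousWithinAt)
    (fun t ht => ((hg t ht.1).sub_const (g a)).hasDerivWithinAt)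
    (by simp)
    (continuousOn_const.sub (continuousOn_const.div continuousOn_id hpos))
    (fun t ht => by
      have := ((hasDerivAt_inv (hpos t (Ico_subset_Icc_self ht))).const_mul B).const_sub (B / a)
      simp only [div_eq_mul_inv] at this ⊢
      exact (this.congr_deriv (by ring)).hasDerivWithinAt)
    (fun t ht => hB t ht.1) (right_mem_Icc.2 hab)
  simpa only [Real.norm_eq_abs] using hfence

theorem abs_sub_le_of_tendsto_of_abs_deriv_le_div_sq {g g' : ℝ → ℝ} {B L a : ℝ} (ha : 0 < a)
    (hg : ∀ t, a ≤ t → HasDerivAt g (g' t) t) (hB : ∀ t, a ≤ t → |g' t| ≤ B / t ^ 2)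
    (hL : Tendsto g atTop (nhds L)) : |L - g a| ≤ B / a := by
  have hlim : Tendsto (fun b => B / a - B / b) atTop (nhds (B / a - 0)) :=
    tendsto_const_nhds.sub (tendsto_const_nhds.div_atTop tendsto_id)
  rw [sub_zero] at hlim
  exact le_of_tendsto_of_tendsto ((hL.sub_const _).abs) hlim
    (eventually_ge_atTop a |>.mono fun b hb => abs_sub_le_of_abs_deriv_le_div_sq ha hb hg hB)

theorem abs_le_mul_rpow_neg_half {f : ℝ → ℝ} {D E u : ℝ} (hD : ∀ u, |f u| ≤ D)
    (hE : ∀ u, 1 ≤ u → |f u| ≤ E / u) (hu : 0 < u) :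
    |f u| ≤ max D E * u ^ (-(1 / 2 : ℝ)) := by
  have hD0 : 0 ≤ D := (abs_nonneg _).trans (hD 0)
  rcases le_total u 1 with h | h
  · calc |f u| ≤ max D E * 1 := by rw [mul_one]; exact (hD u).trans (le_max_left _ _)
      _ ≤ max D E * u ^ (-(1 / 2 : ℝ)) := mul_le_mul_of_nonneg_left
          (Real.one_le_rpow_of_pos_of_le_one_of_nonpos hu h (by norm_num))
          (hD0.trans (le_max_left _ _))
  · have hu0 : 0 < u := zero_lt_one.trans_le h
    calc |f u| ≤ max D E / u := (hE u h).trans (by gcongr; exact le_max_right _ _)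
      _ = max D E * u ^ (-1 : ℝ) := by rw [Real.rpow_neg_one, div_eq_mul_inv]
      _ ≤ max D E * u ^ (-(1 / 2 : ℝ)) := mul_le_mul_of_nonneg_left
          (Real.rpow_le_rpow_of_exponent_le h (by norm_num)) (hD0.trans (le_max_left _ _))

theorem abs_div_sq_le_of_abs_le {s y M N : ℝ} (hM0 : 0 ≤ M) (hM : |s| ≤ M * y ^ 2)
    (hN : |s| ≤ N) : |s / y ^ 2| ≤ 2 * (M + N) * (1 + y ^ 2)⁻¹ := by
  have hN0 : 0 ≤ N := (abs_nonneg s).trans hN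
  rcases eq_or_ne y 0 with rfl | hy
  · simp only [ne_eq, OfNat.ofNat_ne_zero, not_false_eq_true, zero_pow, div_zero, abs_zero]
    positivity
  have hy2 : 0 < y ^ 2 := by positivity
  rw [abs_div, abs_of_pos hy2, ← div_eq_mul_inv, div_le_div_iff₀ hy2 (by positivity)]
  rcases le_total (y ^ 2) 1 with h | h <;> nlinarith [abs_nonneg s]

theorem integral_halfLap_eq {g : ℝ → ℝ} {C M a b : ℝ} (hg : Continuous g)
    (hC : ∀ x, |g x| ≤ C) (hM : ∀ x y, |g (x + y) - 2 * g x + g (x - y)| ≤ M * y ^ 2)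
    (hab : a ≤ b) :
    ∫ x in a..b, halfLap g x =
      -(1 / Real.pi) *
        ∫ y in Ioi 0, (∫ x in a..b, (g (x + y) - 2 * g x + g (x - y))) / y ^ 2 := by
  have hbound : ∀ x y, |(g (x + y) - 2 * g x + g (x - y)) / y ^ 2| ≤
      2 * (M + 4 * C) * (1 + y ^ 2)⁻¹ := fun x y => by
    have hM0 : 0 ≤ M := by simpa using (abs_nonneg _).trans (hM 0 1)
    refine abs_div_sq_le_of_abs_le hM0 (hM x y) ?_
    have := abs_add_three (g (x + y)) (-(2 * g x)) (g (x - y))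
    rw [abs_neg, abs_mul, abs_two, ← sub_eq_add_neg] at this
    linarith [hC (x + y), hC x, hC (x - y)]
  have hint : Integrable (Function.uncurry fun x y => (g (x + y) - 2 * g x + g (x - y)) / y ^ 2)
      ((volume.restrict (Ioc a b)).prod (volume.restrict (Ioi 0))) := by
    refine Integrable.mono' ((integrableOn_const measure_Ioc_lt_top.ne).mul_prod
      (integrable_inv_one_add_sq.restrict (s := Ioi 0)) (f := fun _ => 2 * (M + 4 * C)))
      ?_ (Eventually.of_forall fun p => hbound p.1 p.2)
    have := hg.measurable
    exact Measurable.aestronglyMeasurable (by unfold Function.uncurry; fun_prop)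
  simp only [halfLap, intervalIntegral.integral_of_le hab, ← integral_div]
  rw [integral_const_mul, integral_integral_swap hint]

noncomputable def adjIntegralDiff (f : ℝ → ℝ) (R y : ℝ) : ℝ :=
  (∫ t in R..R + y, f t) - ∫ t in R - y..R, f t

theorem integral_second_diff_eq {g : ℝ → ℝ} (hg : Continuous g) (a b y : ℝ) :
    ∫ x in a..b, (g (x + y) - 2 * g x + g (x - y)) =
      adjIntegralDiff g b y - adjIntegralDiff g a y := by
  have hF : ∀ c d, ∫ t in c..d, g t = (∫ t in 0..d, g t) - ∫ t in 0..c, g t := fun c d =>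
    (intervalIntegral.integral_interval_sub_left (hg.intervalIntegrable 0 d)
      (hg.intervalIntegrable 0 c)).symm
  have h₁ : IntervalIntegrable (fun x => g (x + y)) volume a b :=
    (hg.comp (continuous_add_const y)).intervalIntegrable _ _
  have h₂ : IntervalIntegrable (fun x => 2 * g x) volume a b :=
    (continuous_const.mul hg).intervalIntegrable _ _
  have h₃ : IntervalIntegrable (fun x => g (x - y)) volume a b :=
    (hg.comp (continuous_id.sub continuous_const)).intervalIntegrable _ _
  rw [intervalIntegral.integral_add (h₁.sub h₂) h₃, intervalIntegral.integral_sub h₁ h₂,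
    intervalIntegral.integral_comp_add_right (fun t => g t), intervalIntegral.integral_const_mul,
    intervalIntegral.integral_comp_sub_right (fun t => g t)]
  simp only [adjIntegralDiff, hF a, hF b, hF (a + y), hF (a - y), hF (b - y)]
  ring

theorem adjIntegralDiff_sub_adjIntegralDiff_neg {g : ℝ → ℝ} (hg : Continuous g)
    (c R y : ℝ) :
    adjIntegralDiff g R y - adjIntegralDiff g (-R) y =
      adjIntegralDiff (fun t => g t + g (-t) - c) R y := by
  have hsymm : ∀ a b, ∫ t in a..b, (g t + g (-t) - c) =
      (∫ t in a..b, g t) + (∫ t in -b..-a, g t) - (b - a) * c := fun a b => by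
    have hi : IntervalIntegrable (fun t => g t + g (-t)) volume a b :=
      (hg.add (hg.comp continuous_neg)).intervalIntegrable _ _
    rw [intervalIntegral.integral_sub hi intervalIntegrable_const,
      intervalIntegral.integral_add (g := fun t => g (-t)) (hg.intervalIntegrable _ _)
        ((hg.comp continuous_neg).intervalIntegrable _ _),
      intervalIntegral.integral_comp_neg (fun t => g t), intervalIntegral.integral_const,
      smul_eq_mul]
  simp only [adjIntegralDiff, hsymm, neg_add', neg_sub', sub_neg_eq_add]
  ring

theorem abs_adjIntegralDiff_le_of_hasDerivAt {f f' : ℝ → ℝ} {L R y : ℝ} (hy : 0 ≤ y)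
    (hf : ∀ t ∈ Icc (R - y) (R + y), HasDerivAt f (f' t) t)
    (hL : ∀ t ∈ Icc (R - y) (R + y), |f' t| ≤ L) : |adjIntegralDiff f R y| ≤ L * y ^ 2 := by
  have hcont : ContinuousOn f (Icc (R - y) (R + y)) := fun t ht =>
    (hf t ht).continuousAt.continuousWithinAt
  have hsub : uIcc R (R + y) ⊆ Icc (R - y) (R + y) := by
    rw [uIcc_of_le (by linarith)]; exact Icc_subset_Icc (by linarith) le_rfl
  have h₁ : IntervalIntegrable f volume R (R + y) := (hcont.mono hsub).intervalIntegrable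
  have h₂ : IntervalIntegrable (fun t => f (t - y)) volume R (R + y) :=
    ContinuousOn.intervalIntegrable <| hcont.comp (continuousOn_id.sub continuousOn_const)
      fun t ht => by
        rw [uIcc_of_le (by linarith)] at ht; exact ⟨by linarith [ht.1], by linarith [ht.2]⟩
  have hlip : ∀ t ∈ uIoc R (R + y), ‖f t - f (t - y)‖ ≤ L * y := fun t ht => by
    rw [uIoc_of_le (by linarith)] at ht
    have := (convex_Icc (R - y) (R + y)).norm_image_sub_le_of_norm_hasDerivWithin_le
      (fun s hs => (hf s hs).hasDerivWithinAt) hL (x := t - y) (y := t)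
      ⟨by linarith [ht.1], by linarith [ht.2]⟩ ⟨by linarith [ht.1], ht.2⟩
    rwa [sub_sub_cancel, Real.norm_eq_abs, Real.norm_eq_abs, abs_of_nonneg hy] at this
  have hJ : adjIntegralDiff f R y = ∫ t in R..R + y, (f t - f (t - y)) := by
    rw [adjIntegralDiff, intervalIntegral.integral_sub h₁ h₂,
      intervalIntegral.integral_comp_sub_right f y, add_sub_cancel_right]
  calc |adjIntegralDiff f R y| ≤ L * y * |R + y - R| := by
        rw [hJ]; exact intervalIntegral.norm_integral_le_of_norm_le_const hlip
    _ = L * y ^ 2 := by rw [add_sub_cancel_left, abs_of_nonneg hy]; ring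

theorem integral_abs_le_of_abs_le_rpow {f : ℝ → ℝ} {C a : ℝ} (hf : Continuous f)
    (heven : Function.Even f) (hC : ∀ u, 0 < u → |f u| ≤ C * u ^ (-(1 / 2 : ℝ)))
    (ha : 0 ≤ a) : ∫ t in -a..a, |f t| ≤ 4 * C * a ^ (1 / 2 : ℝ) := by
  have hhalf : ∫ t in (0 : ℝ)..a, |f t| ≤ 2 * C * a ^ (1 / 2 : ℝ) :=
    calc ∫ t in (0 : ℝ)..a, |f t| ≤ ∫ t in (0 : ℝ)..a, C * t ^ (-(1 / 2 : ℝ)) :=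
          intervalIntegral.integral_mono_on_of_le_Ioo ha (hf.abs.intervalIntegrable _ _)
            ((intervalIntegral.intervalIntegrable_rpow' (by norm_num)).const_mul C)
            fun t ht => hC t ht.1
      _ = 2 * C * a ^ (1 / 2 : ℝ) := by
        rw [intervalIntegral.integral_const_mul, integral_rpow (Or.inl (by norm_num)),
          Real.zero_rpow (by norm_num)]
        norm_num
        ring
  have hsym : ∫ t in -a..0, |f t| = ∫ t in (0 : ℝ)..a, |f t| := by
    simpa [heven.eq] using
      (intervalIntegral.integral_comp_neg (a := 0) (b := a) (fun t => |f t|)).symm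
  rw [← intervalIntegral.integral_add_adjacent_intervals (b := 0) (hf.abs.intervalIntegrable _ _)
    (hf.abs.intervalIntegrable _ _), hsym]
  linarith

theorem abs_adjIntegralDiff_le_rpow {f : ℝ → ℝ} {C R y : ℝ} (hf : Continuous f)
    (heven : Function.Even f) (hC : ∀ u, 0 < u → |f u| ≤ C * u ^ (-(1 / 2 : ℝ)))
    (hR : 0 ≤ R) (hRy : R ≤ 2 * y) : |adjIntegralDiff f R y| ≤ 8 * C * y ^ (1 / 2 : ℝ) := by
  have hi : ∀ a b, IntervalIntegrable (fun t => |f t|) volume a b := fun a b =>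
    hf.abs.intervalIntegrable a b
  have hsqrt : (4 * y) ^ (1 / 2 : ℝ) = 2 * y ^ (1 / 2 : ℝ) := by
    rw [Real.mul_rpow (by norm_num) (by linarith), show (4 : ℝ) = 2 ^ (2 : ℝ) by norm_num,
      ← Real.rpow_mul (by norm_num)]
    norm_num
  calc |adjIntegralDiff f R y|
      ≤ |∫ t in R..R + y, f t| + |∫ t in R - y..R, f t| := abs_sub _ _
    _ ≤ (∫ t in R..R + y, |f t|) + ∫ t in R - y..R, |f t| := by
        gcongr <;> exact intervalIntegral.abs_integral_le_integral_abs (by linarith)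
    _ = ∫ t in R - y..R + y, |f t| := by
        rw [add_comm, intervalIntegral.integral_add_adjacent_intervals (hi _ _) (hi _ _)]
    _ ≤ ∫ t in -(4 * y)..4 * y, |f t| :=
        intervalIntegral.integral_mono_interval (by linarith) (by linarith) (by linarith)
          (Eventually.of_forall fun t => abs_nonneg _) (hi _ _)
    _ ≤ 4 * C * (4 * y) ^ (1 / 2 : ℝ) :=
        integral_abs_le_of_abs_le_rpow hf heven hC (by linarith)
    _ = 8 * C * y ^ (1 / 2 : ℝ) := by rw [hsqrt]; ring

theorem abs_adjIntegralDiff_le_of_two_mul_le {f f' : ℝ → ℝ} {K R y : ℝ}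
    (hf' : ∀ u, 1 ≤ u → HasDerivAt f (f' u) u) (hK : ∀ u, 1 ≤ u → |f' u| ≤ K / u ^ 2)
    (hR : 2 ≤ R) (hy : 0 ≤ y) (hyR : 2 * y ≤ R) :
    |adjIntegralDiff f R y| ≤ 4 * K / R ^ 2 * y ^ 2 := by
  have hK0 : 0 ≤ K := by simpa using (abs_nonneg _).trans (hK 1 le_rfl)
  have hmem : ∀ t ∈ Icc (R - y) (R + y), R / 2 ≤ t := fun t ht => by linarith [ht.1]
  refine abs_adjIntegralDiff_le_of_hasDerivAt hy (fun t ht => hf' t (by linarith [hmem t ht]))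
    fun t ht => (hK t (by linarith [hmem t ht])).trans ?_
  calc K / t ^ 2 ≤ K / (R / 2) ^ 2 := div_le_div_of_nonneg_left hK0 (by positivity)
        (pow_le_pow_left₀ (by positivity) (hmem t ht) 2)
    _ = 4 * K / R ^ 2 := by ring

section Convergence

variable {f f' : ℝ → ℝ} {C K : ℝ} (hf : Continuous f) (heven : Function.Even f)
  (hC : ∀ u, 0 < u → |f u| ≤ C * u ^ (-(1 / 2 : ℝ)))
  (hf' : ∀ u, 1 ≤ u → HasDerivAt f (f' u) u) (hK : ∀ u, 1 ≤ u → |f' u| ≤ K / u ^ 2)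
include hf heven hC hf' hK

theorem abs_adjIntegralDiff_div_sq_le {R y : ℝ} (hR : 2 ≤ R) (hy : 0 < y) :
    |adjIntegralDiff f R y / y ^ 2| ≤
      2 * K * (1 + y ^ 2)⁻¹ + (Ioi 1).indicator (fun y => 8 * C * y ^ (-(3 / 2 : ℝ))) y := by
  have hK0 : 0 ≤ K := by simpa using (abs_nonneg _).trans (hK 1 le_rfl)
  have hC0 : 0 ≤ C := by simpa using (abs_nonneg _).trans (hC 1 one_pos)
  have hy2 : 0 < y ^ 2 := by positivity
  rw [abs_div, abs_of_pos hy2, div_le_iff₀ hy2]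
  rcases le_or_gt (2 * y) R with hyR | hRy
  · have hind : 0 ≤ (Ioi 1).indicator (fun y => 8 * C * y ^ (-(3 / 2 : ℝ))) y :=
      indicator_nonneg (fun z hz => by have : (0 : ℝ) < z := zero_lt_one.trans hz; positivity) y
    have : 4 * K / R ^ 2 ≤ 2 * K * (1 + y ^ 2)⁻¹ := by
      have hR2 : 2 * (1 + y ^ 2) ≤ R ^ 2 := by nlinarith
      rw [← div_eq_mul_inv, div_le_div_iff₀ (by positivity) (by positivity)]
      nlinarith [mul_le_mul_of_nonneg_left hR2 hK0]
    nlinarith [abs_adjIntegralDiff_le_of_two_mul_le hf' hK hR hy.le hyR]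
  · have hy1 : y ∈ Ioi 1 := show 1 < y by linarith
    have hpow : y ^ (1 / 2 : ℝ) = y ^ (-(3 / 2 : ℝ)) * y ^ 2 := by
      rw [← Real.rpow_natCast, ← Real.rpow_add hy]; norm_num
    rw [indicator_of_mem hy1]
    have := abs_adjIntegralDiff_le_rpow hf heven hC (by linarith) hRy.le
    rw [hpow] at this
    nlinarith [show 0 ≤ 2 * K * (1 + y ^ 2)⁻¹ by positivity]

theorem tendsto_integral_adjIntegralDiff_div_sq :
    Tendsto (fun R => ∫ y in Ioi 0, adjIntegralDiff f R y / y ^ 2) atTop (nhds 0) := by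
  have hcont : ∀ R, Continuous fun y => adjIntegralDiff f R y := fun R => by
    have hF : ∀ c d, ∫ t in c..d, f t = (∫ t in 0..d, f t) - ∫ t in 0..c, f t := fun c d =>
      (intervalIntegral.integral_interval_sub_left (hf.intervalIntegrable 0 d)
        (hf.intervalIntegrable 0 c)).symm
    have hprim := intervalIntegral.continuous_primitive
      (fun a b => hf.intervalIntegrable (μ := volume) a b) 0
    simp only [adjIntegralDiff, hF R, hF (R - _)]
    fun_prop
  have hlim : ∀ y, 0 < y → Tendsto (fun R => adjIntegralDiff f R y / y ^ 2) atTop (nhds 0) := by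
    intro y hy
    refine squeeze_zero_norm' ?_ ((tendsto_const_nhds.div_atTop
      (tendsto_pow_atTop two_ne_zero)) : Tendsto (fun R : ℝ => 4 * K / R ^ 2) atTop (nhds 0))
    filter_upwards [eventually_ge_atTop 2, eventually_ge_atTop (2 * y)] with R hR hyR
    rw [Real.norm_eq_abs, abs_div, abs_of_pos (pow_pos hy 2), div_le_iff₀ (pow_pos hy 2)]
    exact abs_adjIntegralDiff_le_of_two_mul_le hf' hK hR hy.le hyR
  have hdom : Integrable (fun y => 2 * K * (1 + y ^ 2)⁻¹ +
      (Ioi 1).indicator (fun y => 8 * C * y ^ (-(3 / 2 : ℝ))) y) (volume.restrict (Ioi 0)) := by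
    refine (integrable_inv_one_add_sq.const_mul (2 * K)).restrict.add ?_
    rw [integrable_indicator_iff measurableSet_Ioi, IntegrableOn,
      Measure.restrict_restrict measurableSet_Ioi, Ioi_inter_Ioi, sup_of_le_left zero_le_one]
    exact (integrableOn_Ioi_rpow_of_lt (by norm_num) one_pos).const_mul _
  simpa using tendsto_integral_filter_of_dominated_convergence (μ := volume.restrict (Ioi 0)) _
    (Eventually.of_forall fun R => ((hcont R).measurable.div
      (measurable_id.pow_const 2)).aestronglyMeasurable)
    ((eventually_ge_atTop 2).mono fun R hR => (ae_restrict_iff' measurableSet_Ioi).2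
      (Eventually.of_forall fun y hy => abs_adjIntegralDiff_div_sq_le hf heven hC hf' hK hR hy))
    hdom ((ae_restrict_iff' measurableSet_Ioi).2 (Eventually.of_forall hlim))

end Convergence

theorem integral_halfLap_eq_integral_adjIntegralDiff {g : ℝ → ℝ} {C M R : ℝ} (c : ℝ)
    (hg : Continuous g) (hC : ∀ x, |g x| ≤ C)
    (hM : ∀ x y, |g (x + y) - 2 * g x + g (x - y)| ≤ M * y ^ 2) (hR : 0 ≤ R) :
    ∫ x in -R..R, halfLap g x =
      -(1 / Real.pi) * ∫ y in Ioi 0, adjIntegralDiff (fun t => g t + g (-t) - c) R y / y ^ 2 := by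
  simp only [integral_halfLap_eq hg hC hM (neg_le_self hR), integral_second_diff_eq hg,
    adjIntegralDiff_sub_adjIntegralDiff_neg hg c]

theorem abs_add_comp_neg_sub_le {η : ℝ → ℝ} {ηl ηr B u : ℝ} (hd : Differentiable ℝ η)
    (hB : ∀ x, 1 ≤ |x| → |deriv η x| ≤ B / x ^ 2) (hbot : Tendsto η atBot (nhds ηl))
    (htop : Tendsto η atTop (nhds ηr)) (hu : 1 ≤ u) :
    |η u + η (-u) - (ηr + ηl)| ≤ 2 * B / u := by
  have hu0 : 0 < u := zero_lt_one.trans_le hu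
  have habs : ∀ t, u ≤ t → 1 ≤ |t| := fun t ht => by
    rw [abs_of_pos (hu0.trans_le ht)]; linarith
  have hr : |ηr - η u| ≤ B / u := abs_sub_le_of_tendsto_of_abs_deriv_le_div_sq hu0
    (fun t _ => (hd t).hasDerivAt) (fun t ht => hB t (habs t ht)) htop
  have hl : |ηl - η (-u)| ≤ B / u := abs_sub_le_of_tendsto_of_abs_deriv_le_div_sq
    (g := fun t => η (-t)) hu0 (fun t _ => (hd.comp differentiable_neg t).hasDerivAt)
    (fun t ht => by
      show |deriv (fun t => η (-t)) t| ≤ _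
      rw [deriv_comp_neg, abs_neg, ← neg_sq]; exact hB (-t) (by rw [abs_neg]; exact habs t ht))
    (hbot.comp tendsto_neg_atTop_atBot)
  calc |η u + η (-u) - (ηr + ηl)| = |(ηr - η u) + (ηl - η (-u))| := by
        rw [← abs_neg]; ring_nf
    _ ≤ B / u + B / u := (abs_add_le _ _).trans (add_le_add hr hl)
    _ = 2 * B / u := by ring

theorem tendsto_integral_adjIntegralDiff_add_comp_neg_div_sq {η : ℝ → ℝ} {ηl ηr B C : ℝ}
    (hd : Differentiable ℝ η) (hC : ∀ x, |η x| ≤ C)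
    (hB : ∀ x, 1 ≤ |x| → |deriv η x| ≤ B / x ^ 2)
    (hbot : Tendsto η atBot (nhds ηl)) (htop : Tendsto η atTop (nhds ηr)) :
    Tendsto (fun R => ∫ y in Ioi 0,
      adjIntegralDiff (fun t => η t + η (-t) - (ηr + ηl)) R y / y ^ 2) atTop (nhds 0) := by
  have hf' : ∀ u, HasDerivAt (fun t => η t + η (-t) - (ηr + ηl))
      (deriv η u - deriv η (-u)) u := fun u =>
    (((hd u).hasDerivAt.fun_add ((hd (-u)).hasDerivAt.scomp u (hasDerivAt_neg u))).sub_const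
      (ηr + ηl)).congr_deriv (by simp [sub_eq_add_neg])
  have hK : ∀ u, 1 ≤ u → |deriv η u - deriv η (-u)| ≤ 2 * B / u ^ 2 := fun u hu => by
    have h1 : 1 ≤ |u| := hu.trans (le_abs_self u)
    have := (abs_sub _ _).trans (add_le_add (hB u h1) (hB (-u) (by rwa [abs_neg])))
    rwa [neg_sq, ← two_mul, ← mul_div_assoc] at this
  have hbdd : ∀ u, |η u + η (-u) - (ηr + ηl)| ≤ 2 * C + |ηr + ηl| := fun u => by
    linarith [hC u, hC (-u), abs_sub (η u + η (-u)) (ηr + ηl), abs_add_le (η u) (η (-u))]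
  exact tendsto_integral_adjIntegralDiff_div_sq
    ((hd.continuous.add (hd.continuous.comp continuous_neg)).sub continuous_const)
    (fun u => by simp only [neg_neg, add_comm])
    (fun u hu => abs_le_mul_rpow_neg_half hbdd
      (fun u hu => abs_add_comp_neg_sub_le hd hB hbot htop hu) hu)
    (fun u _ => hf' u) hK

theorem integral_halfLap_tendsto_zero_general
    (ηl ηr : ℝ)
    (η : ℝ → ℝ) (hη : ContDiff ℝ 2 η)
    (hη'' : ∃ M : ℝ, ∀ x, |deriv (deriv η) x| ≤ M)
    (hbot : Tendsto η atBot (nhds ηl)) (htop : Tendsto η atTop (nhds ηr))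
    (hdecay : ∃ A B : ℝ, 0 < A ∧ A < B ∧ ∀ x : ℝ, 1 ≤ |x| →
      A / |x| ^ 2 ≤ deriv η x ∧ deriv η x ≤ B / |x| ^ 2) :
    Tendsto (fun R => ∫ x in (-R)..R, halfLap η x) atTop (nhds 0) := by
  obtain ⟨M, hM⟩ := hη''
  obtain ⟨A, B, hA, -, hdecay⟩ := hdecay
  have hd : Differentiable ℝ η := hη.differentiable two_ne_zero
  have hB : ∀ x, 1 ≤ |x| → |deriv η x| ≤ B / x ^ 2 := fun x hx => by
    obtain ⟨hlow, hup⟩ := hdecay x hx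
    rw [sq_abs] at hlow hup
    have hx2 : 0 < x ^ 2 := by nlinarith [sq_abs x]
    rwa [abs_of_nonneg ((div_pos hA hx2).le.trans hlow)]
  obtain ⟨C, hC⟩ : ∃ C, ∀ x, |η x| ≤ C := by
    obtain ⟨C, hC⟩ := isBounded_iff_forall_norm_le.1 <|
      hη.continuous.isBounded_range_iff_isBigO_atTop_atBot.2
        ⟨htop.isBigO_one ℝ, hbot.isBigO_one ℝ⟩
    exact ⟨C, fun x => hC _ (mem_range_self x)⟩
  simpa using ((tendsto_integral_adjIntegralDiff_add_comp_neg_div_sq hd hC hB hbot htop).const_mul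
    (-(1 / Real.pi))).congr' <| (eventually_ge_atTop 0).mono fun R hR =>
      (integral_halfLap_eq_integral_adjIntegralDiff _ hη.continuous hC
        (abs_second_diff_le hd hη.differentiable_deriv_two hM) hR).symm

/-- `∫_{−R}^{R} |∂x|η(x) dx → 0` as `R → +∞`. -/
theorem integral_halfLap_tendsto_zero
    (ηl ηr : ℝ) (hlr : ηl < ηr)
    (η : ℝ → ℝ) (hη : ContDiff ℝ 2 η)
    (hη'' : ∃ M : ℝ, ∀ x, |deriv (deriv η) x| ≤ M)
    (hbot : Tendsto η atBot (nhds ηl)) (htop : Tendsto η atTop (nhds ηr))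
    (hdecay : ∃ A B : ℝ, 0 < A ∧ A < B ∧ ∀ x : ℝ, 1 ≤ |x| →
      A / |x| ^ 2 ≤ deriv η x ∧ deriv η x ≤ B / |x| ^ 2) :
    Tendsto (fun R => ∫ x in (-R)..R, halfLap η x) atTop (nhds 0) :=
  integral_halfLap_tendsto_zero_general ηl ηr η hη hη'' hbot htop hdecay
end
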